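/- arXiv:1910.05890 — 5 statements merged into one kernel-verified Lean document; each statement's English description precedes it below -/
import Mathlib

section
/- Let T > 0, M > 0, and let w : [0,T] × ℝ → ℝ be twice continuously differentiable with w and ∂ₓw bounded, satisfying the inviscid Burgers equation ∂ₜw + w ∂ₓw = 0 on [0,T] × ℝ, and suppose 0 < ∂ₓw(0,x) ≤ M for all x ∈ ℝ. Then for all (t,x) ∈ [0,T] × ℝ one has 0 < ∂ₓw(t,x) ≤ M/(1 + Mt). -/
/-! Along the characteristic line through `(t, x)`, of slope `w t x`, the solution is constant, so
`w t y = w 0 (y - t * w t y)` for all `y`. Differentiating in `y` gives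
`∂ₓw(t, x) = u₀ / (1 + t u₀)` with `u₀ = ∂ₓw(0, x - t w(t, x)) ∈ (0, M]`, and this is increasing
in `u₀`. -/

open Set Function Topology

lemma eqOn_const_of_hasDerivWithinAt_sub_mul {g k : ℝ → ℝ} {a b c K : ℝ}
    (hk : ∀ s ∈ Ioc a b, |k s| ≤ K) (hg : ContinuousOn g (Icc a b))
    (hg' : ∀ s ∈ Ioc a b, HasDerivWithinAt g ((c - g s) * k s) (Icc a b) s) (hb : g b = c) :
    EqOn g (fun _ ↦ c) (Icc a b) := by
  have hlip : ∀ s ∈ Ioc a b, LipschitzOnWith K.toNNReal (fun y ↦ (c - y) * k s) univ := by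
    refine fun s hs ↦ (LipschitzWith.of_dist_le_mul fun y y' ↦ ?_).lipschitzOnWith
    calc dist ((c - y) * k s) ((c - y') * k s) = |k s| * dist y y' := by
          rw [Real.dist_eq, Real.dist_eq, ← abs_mul, abs_sub_comm]; congr 1; ring
      _ ≤ K.toNNReal * dist y y' := by
          gcongr; exact (hk s hs).trans (Real.le_coe_toNNReal K)
  have hnhds : ∀ s ∈ Ioc a b, Icc a b ∈ 𝓝[≤] s := fun s hs ↦
    Filter.mem_of_superset (Icc_mem_nhdsLE hs.1) (Icc_subset_Icc_right hs.2)
  exact ODE_solution_unique_of_mem_Icc_left hlip hg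
    (fun s hs ↦ (hg' s hs).mono_of_mem_nhdsWithin (hnhds s hs)) (fun _ _ ↦ trivial)
    continuousOn_const
    (fun s hs ↦ by simpa using (hasDerivWithinAt_const s _ c).mono_of_mem_nhdsWithin (hnhds s hs))
    (fun _ _ ↦ trivial) hb

section PartialDerivatives

variable {w : ℝ → ℝ → ℝ} {I : Set ℝ} {t : ℝ}

lemma HasFDerivWithinAt.hasDerivWithinAt_uncurry_comp {L : ℝ × ℝ →L[ℝ] ℝ} {X : ℝ → ℝ} {c : ℝ}
    (hL : HasFDerivWithinAt (uncurry w) L (I ×ˢ univ) (t, X t))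
    (hX : HasDerivWithinAt X c I t) :
    HasDerivWithinAt (fun s ↦ w s (X s)) (L (1, c)) I t :=
  HasFDerivWithinAt.comp_hasDerivWithinAt (l := uncurry w) t hL
    ((hasDerivWithinAt_id t I).prodMk hX) fun _ hs ↦ mk_mem_prod hs (mem_univ _)

lemma HasFDerivWithinAt.hasDerivAt_uncurry_right {L : ℝ × ℝ →L[ℝ] ℝ} {x : ℝ}
    (hL : HasFDerivWithinAt (uncurry w) L (I ×ˢ univ) (t, x)) (ht : t ∈ I) :
    HasDerivAt (w t) (L (0, 1)) x := by
  have := hL.comp_hasDerivWithinAt x ((hasDerivWithinAt_const x univ t).prodMk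
    (hasDerivWithinAt_id x univ)) fun _ _ ↦ mk_mem_prod ht (mem_univ _)
  exact hasDerivWithinAt_univ.mp this

lemma DifferentiableWithinAt.hasDerivWithinAt_uncurry_comp {X : ℝ → ℝ} {c : ℝ}
    (hw : DifferentiableWithinAt ℝ (uncurry w) (I ×ˢ univ) (t, X t)) (ht : t ∈ I)
    (hI : UniqueDiffWithinAt ℝ I t) (hX : HasDerivWithinAt X c I t) :
    HasDerivWithinAt (fun s ↦ w s (X s))
      (derivWithin (fun s ↦ w s (X t)) I t + c * deriv (w t) (X t)) I t := by
  have hL := hw.hasFDerivWithinAt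
  have htime : derivWithin (fun s ↦ w s (X t)) I t =
      fderivWithin ℝ (uncurry w) (I ×ˢ univ) (t, X t) (1, 0) :=
    (hL.hasDerivWithinAt_uncurry_comp (X := fun _ ↦ X t)
      (hasDerivWithinAt_const t I _)).derivWithin hI
  have hspace := (hL.hasDerivAt_uncurry_right ht).deriv
  rw [htime, hspace, ← smul_eq_mul, ← map_smul, ← map_add]
  convert hL.hasDerivWithinAt_uncurry_comp hX using 2
  simp

lemma DifferentiableOn.differentiableAt_uncurry_right
    (hw : DifferentiableOn ℝ (uncurry w) (I ×ˢ univ)) (ht : t ∈ I) (x : ℝ) :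
    DifferentiableAt ℝ (w t) x :=
  ((hw (t, x) ⟨ht, trivial⟩).hasFDerivWithinAt.hasDerivAt_uncurry_right ht).differentiableAt

lemma ContDiffOn.continuousOn_deriv_uncurry_comp
    (hw : ContDiffOn ℝ 1 (uncurry w) (I ×ˢ univ)) (hI : UniqueDiffOn ℝ I) {X : ℝ → ℝ}
    (hX : ContinuousOn X I) :
    ContinuousOn (fun s ↦ deriv (w s) (X s)) I := by
  have hcurve : MapsTo (fun s ↦ (s, X s)) I (I ×ˢ univ) := fun _ hs ↦ ⟨hs, trivial⟩
  have hfderiv := (hw.continuousOn_fderivWithin (hI.prod uniqueDiffOn_univ) le_rfl).comp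
    (continuousOn_id.prodMk hX) hcurve
  refine (hfderiv.clm_apply (continuousOn_const (c := ((0 : ℝ), (1 : ℝ))))).congr fun s hs ↦ ?_
  exact ((hw.differentiableOn one_ne_zero _ (hcurve hs)).hasFDerivWithinAt
    |>.hasDerivAt_uncurry_right hs).deriv

end PartialDerivatives

section Burgers

variable {T : ℝ} {w : ℝ → ℝ → ℝ}

lemma burgers_hasDerivWithinAt_along_line (hT : 0 < T)
    (hw : DifferentiableOn ℝ (uncurry w) (Icc 0 T ×ˢ univ))
    (hburgers : ∀ t ∈ Icc (0 : ℝ) T, ∀ x : ℝ,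
      derivWithin (fun s ↦ w s x) (Icc 0 T) t + w t x * deriv (fun x' ↦ w t x') x = 0)
    (t₀ x₀ c : ℝ) {s : ℝ} (hs : s ∈ Icc 0 T) :
    HasDerivWithinAt (fun s ↦ w s (x₀ + (s - t₀) * c))
      ((c - w s (x₀ + (s - t₀) * c)) * deriv (w s) (x₀ + (s - t₀) * c)) (Icc 0 T) s := by
  have hX : HasDerivWithinAt (fun s ↦ x₀ + (s - t₀) * c) c (Icc 0 T) s := by
    simpa using (((hasDerivWithinAt_id s _).sub_const t₀).mul_const c).const_add x₀
  convert (hw _ ⟨hs, trivial⟩).hasDerivWithinAt_uncurry_comp hs (uniqueDiffOn_Icc hT s hs) hX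
    using 1
  linear_combination -hburgers s hs (x₀ + (s - t₀) * c)

/-- Along the line, `w` solves the linear ODE `g' = (w t x - g) ∂ₓw`, whose coefficient is bounded
on the compact `[0, t]`; the constant `w t x` solves it too. -/
theorem burgers_eq_along_characteristic (hT : 0 < T)
    (hw : ContDiffOn ℝ 1 (uncurry w) (Icc 0 T ×ˢ univ))
    (hburgers : ∀ t ∈ Icc (0 : ℝ) T, ∀ x : ℝ,
      derivWithin (fun s ↦ w s x) (Icc 0 T) t + w t x * deriv (fun x' ↦ w t x') x = 0)
    {t : ℝ} (ht : t ∈ Icc 0 T) (x : ℝ) :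
    w 0 (x - t * w t x) = w t x := by
  set X : ℝ → ℝ := fun s ↦ x + (s - t) * w t x
  have hX : Continuous X := by fun_prop
  have hsub : Icc 0 t ⊆ Icc 0 T := Icc_subset_Icc_right ht.2
  obtain ⟨K, hK⟩ := isCompact_Icc.exists_bound_of_continuousOn
    (hw.continuousOn_deriv_uncurry_comp (uniqueDiffOn_Icc hT) hX.continuousOn)
  have hg : ContinuousOn (fun s ↦ w s (X s)) (Icc 0 T) :=
    hw.continuousOn.comp (continuousOn_id.prodMk hX.continuousOn) fun _ hs ↦ ⟨hs, trivial⟩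
  have := eqOn_const_of_hasDerivWithinAt_sub_mul (K := K)
    (fun s hs ↦ (Real.norm_eq_abs _).symm.trans_le (hK s (hsub (Ioc_subset_Icc_self hs))))
    (hg.mono hsub)
    (fun s hs ↦ (burgers_hasDerivWithinAt_along_line hT (hw.differentiableOn one_ne_zero)
      hburgers t x (w t x) (hsub (Ioc_subset_Icc_self hs))).mono hsub)
    (by simp [X]) ⟨le_rfl, ht.1⟩
  simpa [X, sub_eq_add_neg] using this

end Burgers

lemma pos_and_le_div_of_mul_one_sub_eq {u u₀ t M : ℝ} (ht : 0 ≤ t) (hu₀ : 0 < u₀)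
    (hu₀M : u₀ ≤ M) (h : u₀ * (1 - t * u) = u) :
    0 < u ∧ u ≤ M / (1 + M * t) := by
  have hden : 0 < 1 + t * u₀ := by positivity
  have hu : u = u₀ / (1 + t * u₀) := by
    rw [eq_div_iff hden.ne']; linear_combination -h
  refine ⟨hu ▸ div_pos hu₀ hden, ?_⟩
  have hM : 0 < M := hu₀.trans_le hu₀M
  rw [hu, div_le_div_iff₀ hden (by positivity)]
  nlinarith

theorem burgers_spatial_derivative_decay_general
    (T M : ℝ) (hT : 0 < T) (w : ℝ → ℝ → ℝ)
    (hreg : ContDiffOn ℝ 2 (fun p : ℝ × ℝ => w p.1 p.2) (Set.Icc 0 T ×ˢ Set.univ))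
    (hburgers : ∀ t ∈ Set.Icc (0 : ℝ) T, ∀ x : ℝ,
      derivWithin (fun s => w s x) (Set.Icc 0 T) t
        + w t x * deriv (fun x' => w t x') x = 0)
    (hinit : ∀ x : ℝ, 0 < deriv (fun x' => w 0 x') x ∧ deriv (fun x' => w 0 x') x ≤ M) :
    ∀ t ∈ Set.Icc (0 : ℝ) T, ∀ x : ℝ,
      0 < deriv (fun x' => w t x') x ∧
      deriv (fun x' => w t x') x ≤ M / (1 + M * t) := by
  intro t ht x
  have hw : ContDiffOn ℝ 1 (uncurry w) (Icc 0 T ×ˢ univ) := hreg.of_le one_le_two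
  have hdiff := hw.differentiableOn one_ne_zero
  have hchar : (fun y ↦ w 0 (y - t * w t y)) = w t :=
    funext (burgers_eq_along_characteristic hT hw hburgers ht)
  have hdt := (hdiff.differentiableAt_uncurry_right ht x).hasDerivAt
  have hd0 := (hdiff.differentiableAt_uncurry_right ⟨le_rfl, hT.le⟩ (x - t * w t x)).hasDerivAt
  have hcomp : HasDerivAt (fun y ↦ w 0 (y - t * w t y)) _ x :=
    hd0.comp x ((hasDerivAt_id x).sub (hdt.const_mul t))
  rw [hchar] at hcomp
  obtain ⟨hpos, hle⟩ := hinit (x - t * w t x)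
  exact pos_and_le_div_of_mul_one_sub_eq ht.1 hpos hle (hcomp.unique hdt)

theorem burgers_spatial_derivative_decay
    (T M : ℝ) (hT : 0 < T) (hM : 0 < M) (w : ℝ → ℝ → ℝ)
    (hreg : ContDiffOn ℝ 2 (fun p : ℝ × ℝ => w p.1 p.2) (Set.Icc 0 T ×ˢ Set.univ))
    (hbdd : ∃ B : ℝ, ∀ t ∈ Set.Icc (0 : ℝ) T, ∀ x : ℝ,
      |w t x| ≤ B ∧ |deriv (fun x' => w t x') x| ≤ B)
    (hburgers : ∀ t ∈ Set.Icc (0 : ℝ) T, ∀ x : ℝ,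
      derivWithin (fun s => w s x) (Set.Icc 0 T) t
        + w t x * deriv (fun x' => w t x') x = 0)
    (hinit : ∀ x : ℝ, 0 < deriv (fun x' => w 0 x') x ∧ deriv (fun x' => w 0 x') x ≤ M) :
    ∀ t ∈ Set.Icc (0 : ℝ) T, ∀ x : ℝ,
      0 < deriv (fun x' => w t x') x ∧
      deriv (fun x' => w t x') x ≤ M / (1 + M * t) :=
  burgers_spatial_derivative_decay_general T M hT w hreg hburgers hinit
end

section
/- For every p ∈ [1,∞] there is a constant C > 0 depending only on p and on w₋, w₊ (in particular independent of σ and t) such that for all σ > 0 and all t ≥ 0 the characteristic solution w of the Burgers equation with initial data w_σ satisfies ‖∂ₓw(t,·)‖_{L^p(ℝ)} ≤ C (σ + t)^{−1 + 1/p} and ‖∂ₜw(t,·)‖_{L^p(ℝ)} ≤ C (σ + t)^{−1 + 1/p}. -/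
open Set MeasureTheory
open scoped ENNReal

/-- The smoothed Riemann data `w_σ`. -/
noncomputable def smoothedRiemannData (wm wp σ x : ℝ) : ℝ :=
  (wp + wm) / 2 + (wp - wm) / 2 * Real.tanh (x / σ)

/-!
Along the characteristic `x = y + t w_σ(y)` the solution is `w(t, x) = w_σ(y)`, so
`∂ₓw = w_σ'(y) / (1 + t w_σ'(y))` and `∂ₜw = -w_σ(y) ∂ₓw`. The foot `y` is differentiable in `t`
and `x` because of the difference-quotient identity
`(y - y₀) (1 + t · dslope w_σ y₀ y) = (x - x₀) - (t - t₀) w_σ(y₀)`, whose second factor is `≥ 1`.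

Since `0 ≤ w_σ' ≤ (w₊ - w₋) / (2σ)`, we get `0 ≤ (σ + t) ∂ₓw ≤ (w₊ - w₋) / 2 + 1`. Moreover `∂ₓw` is
the derivative of the monotone map `x ↦ w(t, x)` with values in `[w₋, w₊]`, so
`‖∂ₓw‖₁ ≤ w₊ - w₋`. Interpolating, `‖f‖_p ≤ ‖f‖_∞ ^ (1 - 1/p) ‖f‖₁ ^ (1/p)` gives the `L^p` bound.
-/

open Real Filter Topology

section LpBounds

variable {α E : Type*} [MeasurableSpace α] [NormedAddCommGroup E] {μ : Measure α} {f : α → E}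

theorem eLpNorm_le_eLpNorm_top_rpow_mul_eLpNorm_one_rpow {p : ℝ≥0∞} (hp : 1 ≤ p)
    (hf : eLpNorm f ∞ μ ≠ ∞) :
    eLpNorm f p μ ≤ eLpNorm f ∞ μ ^ (1 - (1 / p).toReal) * eLpNorm f 1 μ ^ (1 / p).toReal := by
  rcases eq_or_ne p ∞ with rfl | hp_top
  · simp
  have hp0 : p ≠ 0 := (zero_lt_one.trans_le hp).ne'
  set q := p.toReal
  have hq : 1 ≤ q := by simpa using ENNReal.toReal_mono hp_top hp
  have hθ : (1 / p).toReal = 1 / q := by simp [q, ENNReal.toReal_inv]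
  rw [hθ, eLpNorm_eq_lintegral_rpow_enorm_toReal hp0 hp_top, eLpNorm_one_eq_lintegral_enorm]
  set B := eLpNorm f ∞ μ
  have hpow : ∫⁻ x, ‖f x‖ₑ ^ q ∂μ ≤ B ^ (q - 1) * ∫⁻ x, ‖f x‖ₑ ∂μ := by
    rw [← lintegral_const_mul' _ _ (ENNReal.rpow_ne_top_of_nonneg (by linarith) hf)]
    refine lintegral_mono_ae ((enorm_ae_le_eLpNormEssSup f μ).mono fun x hx => ?_)
    calc ‖f x‖ₑ ^ q = ‖f x‖ₑ ^ (q - 1) * ‖f x‖ₑ := by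
          conv_lhs => rw [← sub_add_cancel q 1]
          rw [ENNReal.rpow_add_of_nonneg _ _ (by linarith) zero_le_one, ENNReal.rpow_one]
      _ ≤ B ^ (q - 1) * ‖f x‖ₑ := by
          gcongr
          simpa [B, eLpNorm_exponent_top] using hx
  calc (∫⁻ x, ‖f x‖ₑ ^ q ∂μ) ^ (1 / q) ≤ (B ^ (q - 1) * ∫⁻ x, ‖f x‖ₑ ∂μ) ^ (1 / q) := by
        gcongr
    _ = B ^ (1 - 1 / q) * (∫⁻ x, ‖f x‖ₑ ∂μ) ^ (1 / q) := by
        rw [ENNReal.mul_rpow_of_nonneg _ _ (by positivity), ← ENNReal.rpow_mul]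
        congr 2
        field_simp

theorem eLpNorm_le_ofReal_mul_of_norm_le_mul {p : ℝ≥0∞} {g : α → ℝ} {c B : ℝ} (hc : 0 ≤ c)
    (hfg : ∀ x, ‖f x‖ ≤ c * g x) (hg : eLpNorm g p μ ≤ ENNReal.ofReal B) :
    eLpNorm f p μ ≤ ENNReal.ofReal (c * B) :=
  calc eLpNorm f p μ ≤ eLpNorm (c • g) p μ := eLpNorm_mono_real hfg
    _ = ENNReal.ofReal c * eLpNorm g p μ := by
      rw [eLpNorm_const_smul, Real.enorm_of_nonneg hc]
    _ ≤ ENNReal.ofReal (c * B) := by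
      rw [ENNReal.ofReal_mul hc]
      gcongr

end LpBounds

/-- The foot `y` of the characteristic `y + t W(y) = x` through `(t, x)`. -/
noncomputable def characteristicFoot (W : ℝ → ℝ) (t x : ℝ) : ℝ :=
  Function.invFun (fun y => y + t * W y) x

/-- `∂ₓw(t, x) = W'(y) / (1 + t W'(y))` at the foot `y` of the characteristic through `(t, x)`. -/
noncomputable def characteristicDeriv (W : ℝ → ℝ) (t x : ℝ) : ℝ :=
  deriv W (characteristicFoot W t x) / (1 + t * deriv W (characteristicFoot W t x))

section Characteristics

variable {W : ℝ → ℝ} {a b : ℝ}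

theorem surjective_add_mul_of_mem_Icc (hWc : Continuous W) (hab : ∀ y, W y ∈ Icc a b) (t : ℝ) :
    Function.Surjective fun y => y + t * W y := by
  have hbound : ∀ y, |t * W y| ≤ |t| * max |a| |b| := fun y => by
    rw [abs_mul]
    exact mul_le_mul_of_nonneg_left (abs_le_max_abs_abs (hab y).1 (hab y).2) (abs_nonneg t)
  refine Continuous.surjective (by fun_prop) ?_ ?_
  · refine tendsto_atTop_mono (fun y => ?_)
      (tendsto_atTop_add_const_right _ (-(|t| * max |a| |b|)) tendsto_id)
    linarith [id_eq y, neg_abs_le (t * W y), hbound y]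
  · refine tendsto_atBot_mono (fun y => ?_)
      (tendsto_atBot_add_const_right _ (|t| * max |a| |b|) tendsto_id)
    linarith [id_eq y, le_abs_self (t * W y), hbound y]

theorem characteristicFoot_add_mul (hWc : Continuous W) (hab : ∀ y, W y ∈ Icc a b) (t x : ℝ) :
    characteristicFoot W t x + t * W (characteristicFoot W t x) = x :=
  Function.invFun_eq (surjective_add_mul_of_mem_Icc hWc hab t x)

theorem monotone_characteristicFoot (hWc : Continuous W) (hW : Monotone W)
    (hab : ∀ y, W y ∈ Icc a b) {t : ℝ} (ht : 0 ≤ t) : Monotone (characteristicFoot W t) := by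
  intro x x' hxx'
  by_contra! hlt
  have := add_lt_add_of_lt_of_le hlt (mul_le_mul_of_nonneg_left (hW hlt.le) ht)
  rw [characteristicFoot_add_mul hWc hab, characteristicFoot_add_mul hWc hab] at this
  linarith

theorem Monotone.dslope_nonneg (hW : Monotone W) (y₀ y : ℝ) : 0 ≤ dslope W y₀ y := by
  rcases eq_or_ne y y₀ with rfl | hne
  · rw [dslope_same]
    exact hW.deriv_nonneg
  · rw [dslope_of_ne _ hne]
    exact (hW.monotoneOn univ).slope_nonneg trivial trivial

theorem sub_mul_one_add_mul_dslope {t t₀ x x₀ y y₀ : ℝ} (h : y + t * W y = x)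
    (h₀ : y₀ + t₀ * W y₀ = x₀) :
    (y - y₀) * (1 + t * dslope W y₀ y) = x - x₀ - (t - t₀) * W y₀ := by
  have hslope := sub_smul_dslope W y₀ y
  rw [smul_eq_mul] at hslope
  linear_combination t * hslope + h - h₀

theorem hasDerivWithinAt_of_sub_mul_one_add_mul_dslope (hW : Monotone W) {φ τ : ℝ → ℝ}
    {s : Set ℝ} {r₀ c : ℝ} (hr₀ : r₀ ∈ s) (hWφ : DifferentiableAt ℝ W (φ r₀))
    (hτ : ContinuousWithinAt τ s r₀) (hτ_nonneg : ∀ r ∈ s, 0 ≤ τ r)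
    (h : ∀ r ∈ s, (φ r - φ r₀) * (1 + τ r * dslope W (φ r₀) (φ r)) = (r - r₀) * c) :
    HasDerivWithinAt φ (c / (1 + τ r₀ * deriv W (φ r₀))) s r₀ := by
  -- The factor `D r ≥ 1` makes `φ` Lipschitz at `r₀`, hence continuous, so `D r → D r₀`.
  set D : ℝ → ℝ := fun r => 1 + τ r * dslope W (φ r₀) (φ r)
  have hD : ∀ r ∈ s, 1 ≤ D r := fun r hr =>
    le_add_of_nonneg_right (mul_nonneg (hτ_nonneg r hr) (hW.dslope_nonneg _ _))
  have hφ : ContinuousWithinAt φ s r₀ := by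
    rw [ContinuousWithinAt, ← tendsto_sub_nhds_zero_iff]
    have hlim : Tendsto (fun r => |c| * |r - r₀|) (𝓝[s] r₀) (𝓝 0) := by
      have : ContinuousWithinAt (fun r => |c| * |r - r₀|) s r₀ := by fun_prop
      simpa using this.tendsto
    refine squeeze_zero_norm' ?_ hlim
    filter_upwards [self_mem_nhdsWithin] with r hr
    calc ‖φ r - φ r₀‖ ≤ |φ r - φ r₀| * D r := le_mul_of_one_le_right (abs_nonneg _) (hD r hr)
      _ = |c| * |r - r₀| := by
          rw [← abs_of_pos (zero_lt_one.trans_le (hD r hr)), ← abs_mul, h r hr, abs_mul, mul_comm]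
  have hDcont : ContinuousWithinAt D s r₀ :=
    continuousWithinAt_const.add
      (hτ.mul ((continuousAt_dslope_same.mpr hWφ).comp_continuousWithinAt hφ))
  have hD₀ : D r₀ = 1 + τ r₀ * deriv W (φ r₀) := by simp [D]
  rw [hasDerivWithinAt_iff_tendsto_slope, ← hD₀]
  refine ((tendsto_const_nhds.div hDcont (zero_lt_one.trans_le (hD r₀ hr₀)).ne').mono_left
    (nhdsWithin_mono _ sdiff_subset)).congr' ?_
  filter_upwards [self_mem_nhdsWithin] with r ⟨hr, hne⟩
  have hDr := zero_lt_one.trans_le (hD r hr)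
  have hrr₀ : r - r₀ ≠ 0 := sub_ne_zero.mpr hne
  rw [Pi.div_apply, slope_def_field, div_eq_div_iff hDr.ne' hrr₀, mul_comm c, ← h r hr]

theorem hasDerivAt_characteristicFoot (hWd : Differentiable ℝ W) (hW : Monotone W)
    (hab : ∀ y, W y ∈ Icc a b) {t : ℝ} (ht : 0 ≤ t) (x : ℝ) :
    HasDerivAt (characteristicFoot W t) (1 / (1 + t * deriv W (characteristicFoot W t x))) x := by
  rw [← hasDerivWithinAt_univ]
  refine hasDerivWithinAt_of_sub_mul_one_add_mul_dslope hW (mem_univ x) (hWd _)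
    continuousWithinAt_const (fun _ _ => ht) fun x' _ => ?_
  rw [sub_mul_one_add_mul_dslope (characteristicFoot_add_mul hWd.continuous hab t x')
    (characteristicFoot_add_mul hWd.continuous hab t x)]
  ring

theorem hasDerivWithinAt_characteristicFoot_time (hWd : Differentiable ℝ W) (hW : Monotone W)
    (hab : ∀ y, W y ∈ Icc a b) {t : ℝ} (ht : 0 ≤ t) (x : ℝ) :
    HasDerivWithinAt (fun s => characteristicFoot W s x)
      (-W (characteristicFoot W t x) / (1 + t * deriv W (characteristicFoot W t x))) (Ici 0) t := by
  refine hasDerivWithinAt_of_sub_mul_one_add_mul_dslope (φ := fun s => characteristicFoot W s x)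
    (τ := id) hW ht (hWd _) continuousWithinAt_id (fun _ hs => hs) fun s _ => ?_
  rw [id, sub_mul_one_add_mul_dslope (characteristicFoot_add_mul hWd.continuous hab s x)
    (characteristicFoot_add_mul hWd.continuous hab t x)]
  ring

theorem hasDerivAt_comp_characteristicFoot (hWd : Differentiable ℝ W) (hW : Monotone W)
    (hab : ∀ y, W y ∈ Icc a b) {t : ℝ} (ht : 0 ≤ t) (x : ℝ) :
    HasDerivAt (fun x' => W (characteristicFoot W t x')) (characteristicDeriv W t x) x := by
  have := (hWd _).hasDerivAt.comp x (hasDerivAt_characteristicFoot hWd hW hab ht x)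
  rwa [mul_one_div] at this

section Solution

variable {w : ℝ → ℝ → ℝ}

theorem eq_comp_characteristicFoot (hWc : Continuous W) (hab : ∀ y, W y ∈ Icc a b)
    (hw : ∀ t, 0 ≤ t → ∀ y, w t (y + t * W y) = W y) {t : ℝ} (ht : 0 ≤ t) (x : ℝ) :
    w t x = W (characteristicFoot W t x) := by
  conv_lhs => rw [← characteristicFoot_add_mul hWc hab t x]
  exact hw t ht _

theorem deriv_eq_characteristicDeriv (hWd : Differentiable ℝ W) (hW : Monotone W)
    (hab : ∀ y, W y ∈ Icc a b) (hw : ∀ t, 0 ≤ t → ∀ y, w t (y + t * W y) = W y)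
    {t : ℝ} (ht : 0 ≤ t) (x : ℝ) :
    deriv (fun x' => w t x') x = characteristicDeriv W t x := by
  simp_rw [eq_comp_characteristicFoot hWd.continuous hab hw ht]
  exact (hasDerivAt_comp_characteristicFoot hWd hW hab ht x).deriv

theorem derivWithin_time_eq_neg_mul_characteristicDeriv (hWd : Differentiable ℝ W)
    (hW : Monotone W) (hab : ∀ y, W y ∈ Icc a b) (hw : ∀ t, 0 ≤ t → ∀ y, w t (y + t * W y) = W y)
    {t : ℝ} (ht : 0 ≤ t) (x : ℝ) :
    derivWithin (fun s => w s x) (Ici 0) t =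
      -W (characteristicFoot W t x) * characteristicDeriv W t x := by
  have hcomp := (hWd _).hasDerivAt.comp_hasDerivWithinAt t
    (hasDerivWithinAt_characteristicFoot_time hWd hW hab ht x)
  have hw' : HasDerivWithinAt (fun s => w s x) _ (Ici 0) t :=
    hcomp.congr (fun s hs => eq_comp_characteristicFoot hWd.continuous hab hw hs x)
      (eq_comp_characteristicFoot hWd.continuous hab hw ht x)
  rw [hw'.derivWithin (uniqueDiffOn_Ici 0 t ht), characteristicDeriv]
  ring

end Solution

theorem characteristicDeriv_nonneg (hW : Monotone W) {t : ℝ} (ht : 0 ≤ t) (x : ℝ) :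
    0 ≤ characteristicDeriv W t x := by
  have := hW.deriv_nonneg (x := characteristicFoot W t x)
  unfold characteristicDeriv
  positivity

theorem mul_characteristicDeriv_le (hW : Monotone W) {A s t : ℝ} (hA : ∀ y, deriv W y ≤ A)
    (hs : 0 ≤ s) (ht : 0 ≤ t) (x : ℝ) :
    (s + t) * characteristicDeriv W t x ≤ s * A + 1 := by
  have h0 := hW.deriv_nonneg (x := characteristicFoot W t x)
  have hA' := hA (characteristicFoot W t x)
  unfold characteristicDeriv
  rw [mul_div_assoc', div_le_iff₀ (by positivity)]
  nlinarith [mul_nonneg hs (mul_nonneg ht h0), mul_nonneg (mul_nonneg hs ht) (mul_nonneg h0 h0)]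

theorem Monotone.lintegral_ofReal_le_of_hasDerivAt {F F' : ℝ → ℝ} (hF : Monotone F)
    (hF' : ∀ x, HasDerivAt F (F' x) x) (hab : ∀ x, F x ∈ Icc a b) :
    ∫⁻ x, ENNReal.ofReal (F' x) ≤ ENNReal.ofReal (b - a) := by
  have := lintegral_deriv_eq_volume_image_of_monotoneOn MeasurableSet.univ
    (fun x _ => (hF' x).hasDerivWithinAt) (hF.monotoneOn univ)
  rw [Measure.restrict_univ, image_univ] at this
  rw [this, ← Real.volume_Icc]
  exact measure_mono (range_subset_iff.2 hab)

theorem eLpNorm_one_characteristicDeriv_le (hWd : Differentiable ℝ W) (hW : Monotone W)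
    (hab : ∀ y, W y ∈ Icc a b) {t : ℝ} (ht : 0 ≤ t) :
    eLpNorm (characteristicDeriv W t) 1 volume ≤ ENNReal.ofReal (b - a) := by
  rw [eLpNorm_one_eq_lintegral_enorm]
  simp_rw [Real.enorm_of_nonneg (characteristicDeriv_nonneg hW ht _)]
  have hF := hW.comp (monotone_characteristicFoot hWd.continuous hW hab ht)
  exact hF.lintegral_ofReal_le_of_hasDerivAt (hasDerivAt_comp_characteristicFoot hWd hW hab ht)
    fun x => hab _

end Characteristics

theorem Real.hasDerivAt_tanh (x : ℝ) : HasDerivAt tanh (1 - tanh x ^ 2) x := by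
  have h : HasDerivAt (fun y => sinh y / cosh y)
      ((cosh x * cosh x - sinh x * sinh x) / cosh x ^ 2) x :=
    (hasDerivAt_sinh x).div (hasDerivAt_cosh x) (cosh_pos x).ne'
  rw [show tanh = fun y => sinh y / cosh y from funext tanh_eq_sinh_div_cosh]
  convert h using 1
  field_simp [(cosh_pos x).ne']

section SmoothedRiemannData

variable {wm wp σ : ℝ}

theorem hasDerivAt_smoothedRiemannData (x : ℝ) :
    HasDerivAt (smoothedRiemannData wm wp σ)
      ((wp - wm) / (2 * σ) * (1 - tanh (x / σ) ^ 2)) x := by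
  have h := (((hasDerivAt_tanh (x / σ)).comp x ((hasDerivAt_id x).div_const σ)).const_mul
    ((wp - wm) / 2)).const_add ((wp + wm) / 2)
  exact h.congr_deriv (by ring)

theorem differentiable_smoothedRiemannData : Differentiable ℝ (smoothedRiemannData wm wp σ) :=
  fun x => (hasDerivAt_smoothedRiemannData x).differentiableAt

theorem smoothedRiemannData_mem_Icc (hw : wm ≤ wp) (x : ℝ) :
    smoothedRiemannData wm wp σ x ∈ Icc wm wp := by
  have h := abs_le.mp (abs_tanh_lt_one (x / σ)).le
  unfold smoothedRiemannData
  constructor <;> nlinarith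

theorem deriv_smoothedRiemannData_mem_Icc (hw : wm ≤ wp) (hσ : 0 ≤ σ) (x : ℝ) :
    deriv (smoothedRiemannData wm wp σ) x ∈ Icc 0 ((wp - wm) / (2 * σ)) := by
  rw [(hasDerivAt_smoothedRiemannData x).deriv]
  have hc : 0 ≤ (wp - wm) / (2 * σ) := div_nonneg (by linarith) (by linarith)
  have h1 := tanh_sq_lt_one (x / σ)
  have h0 := sq_nonneg (tanh (x / σ))
  constructor <;> nlinarith

theorem monotone_smoothedRiemannData (hw : wm ≤ wp) (hσ : 0 ≤ σ) :
    Monotone (smoothedRiemannData wm wp σ) :=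
  monotone_of_deriv_nonneg differentiable_smoothedRiemannData fun x =>
    (deriv_smoothedRiemannData_mem_Icc hw hσ x).1

theorem eLpNorm_characteristicDeriv_smoothedRiemannData_le (hw : wm ≤ wp) (hσ : 0 < σ)
    {t : ℝ} (ht : 0 ≤ t) {p : ℝ≥0∞} (hp : 1 ≤ p) :
    eLpNorm (characteristicDeriv (smoothedRiemannData wm wp σ) t) p volume ≤
      ENNReal.ofReal ((wp - wm + 1) * (σ + t) ^ (-1 + (1 / p).toReal)) := by
  set W := smoothedRiemannData wm wp σ
  set K := wp - wm + 1
  set θ := (1 / p).toReal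
  have hW := monotone_smoothedRiemannData hw hσ.le
  have hs : 0 < σ + t := by linarith
  have hK : 0 < K := by linarith
  have hθ0 : 0 ≤ θ := ENNReal.toReal_nonneg
  have hθ1 : θ ≤ 1 := ENNReal.toReal_le_of_le_ofReal zero_le_one
    (by simpa using ENNReal.inv_le_one.mpr hp)
  have hsup : eLpNorm (characteristicDeriv W t) ∞ volume ≤ ENNReal.ofReal (K / (σ + t)) := by
    rw [eLpNorm_exponent_top]
    refine eLpNormEssSup_le_of_ae_bound (ae_of_all _ fun x => ?_)
    have h := mul_characteristicDeriv_le hW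
      (fun y => (deriv_smoothedRiemannData_mem_Icc hw hσ.le y).2) hσ.le ht x
    rw [Real.norm_of_nonneg (characteristicDeriv_nonneg hW ht x), le_div_iff₀ hs]
    have hσA : σ * ((wp - wm) / (2 * σ)) = (wp - wm) / 2 := by field_simp
    linarith
  have hL1 : eLpNorm (characteristicDeriv W t) 1 volume ≤ ENNReal.ofReal K :=
    (eLpNorm_one_characteristicDeriv_le differentiable_smoothedRiemannData hW
      (smoothedRiemannData_mem_Icc hw) ht).trans (ENNReal.ofReal_le_ofReal (by linarith))
  calc eLpNorm (characteristicDeriv W t) p volume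
      ≤ eLpNorm (characteristicDeriv W t) ∞ volume ^ (1 - θ) *
          eLpNorm (characteristicDeriv W t) 1 volume ^ θ :=
        eLpNorm_le_eLpNorm_top_rpow_mul_eLpNorm_one_rpow hp (hsup.trans_lt ENNReal.ofReal_lt_top).ne
    _ ≤ ENNReal.ofReal (K / (σ + t)) ^ (1 - θ) * ENNReal.ofReal K ^ θ := by
        gcongr
    _ = ENNReal.ofReal ((K / (σ + t)) ^ (1 - θ) * K ^ θ) := by
        rw [ENNReal.ofReal_rpow_of_nonneg (by positivity) (by linarith),
          ENNReal.ofReal_rpow_of_nonneg hK.le hθ0, ENNReal.ofReal_mul (by positivity)]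
    _ = ENNReal.ofReal (K * (σ + t) ^ (-1 + θ)) := by
        rw [Real.div_rpow hK.le hs.le, div_mul_eq_mul_div, ← Real.rpow_add hK, sub_add_cancel,
          Real.rpow_one, div_eq_mul_inv, ← Real.rpow_neg hs.le, neg_sub, sub_eq_neg_add]

end SmoothedRiemannData

theorem burgers_characteristic_solution_first_derivative_Lp_bound
    (wm wp : ℝ) (hw : wm < wp) (p : ℝ≥0∞) (hp : 1 ≤ p) :
    ∃ C : ℝ, 0 < C ∧ ∀ σ : ℝ, 0 < σ → ∀ w : ℝ → ℝ → ℝ,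
      -- `w` is the characteristic solution of Burgers' equation with data `w_σ`:
      -- it satisfies `w(t, y + t w_σ(y)) = w_σ(y)` for `t ≥ 0`
      (∀ t : ℝ, 0 ≤ t → ∀ y : ℝ,
        w t (y + t * smoothedRiemannData wm wp σ y) = smoothedRiemannData wm wp σ y) →
      ∀ t : ℝ, 0 ≤ t →
        eLpNorm (fun x => deriv (fun x' => w t x') x) p volume
          ≤ ENNReal.ofReal (C * (σ + t) ^ (-1 + (1 / p).toReal)) ∧
        eLpNorm (fun x => derivWithin (fun s => w s x) (Set.Ici 0) t) p volume
          ≤ ENNReal.ofReal (C * (σ + t) ^ (-1 + (1 / p).toReal)) := by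
  set M := max |wm| |wp|
  have hM : 0 ≤ M := (abs_nonneg wm).trans (le_max_left _ _)
  refine ⟨(1 + M) * (wp - wm + 1), mul_pos (by positivity) (by linarith),
    fun σ hσ w hchar t ht => ?_⟩
  set W := smoothedRiemannData wm wp σ
  have hWd : Differentiable ℝ W := differentiable_smoothedRiemannData
  have hW := monotone_smoothedRiemannData hw.le hσ.le
  have hab := smoothedRiemannData_mem_Icc (σ := σ) hw.le
  have hg0 := characteristicDeriv_nonneg hW ht
  have hg := eLpNorm_characteristicDeriv_smoothedRiemannData_le hw.le hσ ht hp
  rw [mul_assoc]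
  refine ⟨eLpNorm_le_ofReal_mul_of_norm_le_mul (by positivity) (fun x => ?_) hg,
    eLpNorm_le_ofReal_mul_of_norm_le_mul (by positivity) (fun x => ?_) hg⟩
  · rw [deriv_eq_characteristicDeriv hWd hW hab hchar ht, Real.norm_of_nonneg (hg0 x)]
    exact le_mul_of_one_le_left (hg0 x) (by linarith)
  · rw [derivWithin_time_eq_neg_mul_characteristicDeriv hWd hW hab hchar ht, norm_mul, norm_neg,
      Real.norm_of_nonneg (hg0 x), Real.norm_eq_abs]
    refine mul_le_mul_of_nonneg_right ?_ (hg0 x)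
    linarith [abs_le_max_abs_abs (hab (characteristicFoot W t x)).1 (hab _).2]
end

section
/- There exist constants C > 0 and σ₀ > 0, depending only on w₋ and w₊, such that for every σ ∈ (0, σ₀) and every t > 0 the characteristic solution w of the Burgers equation with initial data w_σ satisfies sup_{x∈ℝ} |w(t,x) − wʳ(t,x)| ≤ (C/t)·(σ·ln(1+t) + σ·|ln σ|), where wʳ is the rarefaction wave connecting w₋ and w₊. -/
open Set

/-- The rarefaction wave connecting `w₋ < w₊` (for `t > 0`). -/
noncomputable def rarefactionWave (wm wp : ℝ) (t x : ℝ) : ℝ :=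
  if x ≤ wm * t then wm else if wp * t ≤ x then wp else x / t

lemma tanh_formula (u : ℝ) :
    Real.tanh u = (Real.exp u - Real.exp (-u)) / (Real.exp u + Real.exp (-u)) := by
  rw [Real.tanh_eq_sinh_div_cosh, Real.sinh_eq, Real.cosh_eq]
  have h : Real.exp u + Real.exp (-u) ≠ 0 := by positivity
  field_simp

lemma tanh_lt_one' (u : ℝ) : Real.tanh u < 1 := by
  rw [tanh_formula]
  have h1 : 0 < Real.exp u + Real.exp (-u) := by positivity
  rw [div_lt_one h1]
  have := Real.exp_pos (-u); linarith

lemma neg_one_lt_tanh' (u : ℝ) : -1 < Real.tanh u := by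
  rw [tanh_formula]
  have h1 : 0 < Real.exp u + Real.exp (-u) := by positivity
  rw [lt_div_iff₀ h1]
  have := Real.exp_pos u; linarith

lemma one_sub_tanh_le (u : ℝ) : 1 - Real.tanh u ≤ 2 * Real.exp (-(2*u)) := by
  rw [tanh_formula]
  have h1 : 0 < Real.exp u + Real.exp (-u) := by positivity
  have key : 1 - (Real.exp u - Real.exp (-u)) / (Real.exp u + Real.exp (-u))
      = 2 * Real.exp (-u) / (Real.exp u + Real.exp (-u)) := by field_simp; ring
  rw [key, div_le_iff₀ h1]
  have h2 : Real.exp (-(2*u)) * Real.exp u = Real.exp (-u) := by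
    rw [← Real.exp_add]; ring_nf
  have h3 : (0:ℝ) < Real.exp (-(2*u)) * Real.exp (-u) := by positivity
  nlinarith [Real.exp_pos (-u)]

lemma one_add_tanh_le (u : ℝ) : 1 + Real.tanh u ≤ 2 * Real.exp (2*u) := by
  have := one_sub_tanh_le (-u)
  rw [Real.tanh_neg] at this
  have h : -(2 * -u) = 2*u := by ring
  rw [h] at this
  linarith

lemma bootstrap (K σ s : ℝ) (hs : 0 ≤ s) (h : s ≤ K * Real.exp (-(2*s/σ))) :
    s * Real.exp (2*s/σ) ≤ K := by
  have e := (Real.exp_pos (2*s/σ)).le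
  calc s * Real.exp (2*s/σ) ≤ K * Real.exp (-(2*s/σ)) * Real.exp (2*s/σ) :=
        mul_le_mul_of_nonneg_right h e
    _ = K := by rw [mul_assoc, ← Real.exp_add, neg_add_cancel, Real.exp_zero, mul_one]

lemma key_est (b σ t s : ℝ) (hb : 0 < b) (hσ : 0 < σ) (hσ1 : σ < 1/2)
    (ht : 0 < t) (hs : 0 ≤ s) (h : s * Real.exp (2*s/σ) ≤ 2*b*t) :
    s ≤ (1 + (1 + |Real.log (2*b)|) / Real.log 2) * (σ * Real.log (1+t) + σ * |Real.log σ|) := by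
  set A : ℝ := |Real.log (2*b)| with hA
  set C : ℝ := 1 + (1 + A) / Real.log 2 with hC
  set L : ℝ := Real.log 2 with hLdef
  have hL : 0 < L := Real.log_pos (by norm_num)
  have hA0 : 0 ≤ A := abs_nonneg _
  have hCL : C * L = L + 1 + A := by rw [hC]; field_simp; ring
  have hC1 : 1 ≤ C := by
    rw [hC]; nlinarith [div_nonneg (by linarith : (0:ℝ) ≤ 1 + A) hL.le]
  have hC0 : 0 ≤ C := by linarith
  have hlogσneg : Real.log σ < 0 := Real.log_neg hσ (by linarith)
  set m : ℝ := |Real.log σ| with hm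
  have habs : m = -Real.log σ := abs_of_neg hlogσneg
  have hmL : L ≤ m := by
    rw [habs]
    have : Real.log σ ≤ Real.log (1/2) := Real.log_le_log hσ (by linarith)
    rw [Real.log_div one_ne_zero (by norm_num), Real.log_one] at this
    linarith
  set R : ℝ := Real.log (1+t) with hR
  have hR0 : 0 ≤ R := Real.log_nonneg (by linarith)
  have hCLCm : C * L ≤ C * m := mul_le_mul_of_nonneg_left hmL hC0
  rcases le_or_gt s σ with hcase | hcase
  · have h5 : σ * (C * L) = σ * L + σ + σ * A := by rw [hCL]; ring
    nlinarith [mul_le_mul_of_nonneg_left hCLCm hσ.le,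
      mul_nonneg (mul_nonneg hσ.le hC0) hR0,
      mul_nonneg hσ.le hL.le, mul_nonneg hσ.le hA0]
  · have hsp : 0 < s := lt_trans hσ hcase
    have hexple : Real.exp (2*s/σ) ≤ 2*b*(1+t)/σ := by
      have h1 : Real.exp (2*s/σ) ≤ 2*b*t/s := by
        rw [le_div_iff₀ hsp]; nlinarith
      have h2 : 2*b*t/s ≤ 2*b*(1+t)/σ := by
        apply div_le_div₀ (by positivity) (by nlinarith) hσ hcase.le
      linarith
    have hloglog : 2*s/σ ≤ Real.log (2*b*(1+t)/σ) := by
      have := Real.log_le_log (Real.exp_pos _) hexple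
      rwa [Real.log_exp] at this
    have hsplit : Real.log (2*b*(1+t)/σ) = Real.log (2*b) + R - Real.log σ := by
      rw [Real.log_div (by positivity) (ne_of_gt hσ),
        Real.log_mul (by positivity) (by positivity)]
    rw [hsplit] at hloglog
    have hmain : 2*s ≤ σ * (A + R + m) := by
      rw [habs]
      rw [div_le_iff₀ hσ] at hloglog
      have hlA : Real.log (2*b) ≤ A := le_abs_self _
      nlinarith
    have hACm : A ≤ C * m := by nlinarith
    have e1 : σ * A ≤ C * (σ * m) := by
      have h1 := mul_le_mul_of_nonneg_left hACm hσ.le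
      calc σ * A ≤ σ * (C * m) := h1
        _ = C * (σ * m) := by ring
    have hσm0 : 0 ≤ σ * m := mul_nonneg hσ.le (le_trans hL.le hmL)
    have e2 : σ * R ≤ C * (σ * R) := by
      have h1 := mul_le_mul_of_nonneg_right hC1 (mul_nonneg hσ.le hR0)
      linarith [h1]
    have e3 : σ * m ≤ C * (σ * m) := by
      have h1 := mul_le_mul_of_nonneg_right hC1 hσm0
      linarith [h1]
    have e4 : 0 ≤ C * (σ * R) := mul_nonneg hC0 (mul_nonneg hσ.le hR0)
    have egoal : C * (σ * R + σ * m) = C * (σ * R) + C * (σ * m) := by ring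
    rw [egoal]
    have hmain' : 2*s ≤ σ * A + σ * R + σ * m := by linarith [hmain, (by ring : σ * (A + R + m) = σ * A + σ * R + σ * m)]
    linarith only [hmain', e1, e2, e3, e4]

lemma continuous_tanh' : Continuous Real.tanh := by
  have : Real.tanh = fun x => Real.sinh x / Real.cosh x := by
    funext x; exact Real.tanh_eq_sinh_div_cosh x
  rw [this]
  exact Real.continuous_sinh.div Real.continuous_cosh fun x => (Real.cosh_pos x).ne'

lemma smoothed_lt (wm wp σ y : ℝ) (hw : wm < wp) :
    wm < smoothedRiemannData wm wp σ y ∧ smoothedRiemannData wm wp σ y < wp := by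
  unfold smoothedRiemannData
  have h1 := tanh_lt_one' (y/σ)
  have h2 := neg_one_lt_tanh' (y/σ)
  constructor <;> nlinarith

lemma exists_char (wm wp σ : ℝ) (hw : wm < wp) (hσ : 0 < σ) (t x : ℝ) (ht : 0 < t) :
    ∃ y, y + t * smoothedRiemannData wm wp σ y = x := by
  set f : ℝ → ℝ := fun y => y + t * smoothedRiemannData wm wp σ y with hf
  have hcont : Continuous f := by
    apply continuous_id.add
    apply continuous_const.mul
    unfold smoothedRiemannData
    exact continuous_const.add
      (continuous_const.mul (continuous_tanh'.comp (continuous_id.div_const σ)))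
  have hy12 : x - t * wp ≤ x - t * wm := by nlinarith
  have hfy1 : f (x - t * wp) ≤ x := by
    have := (smoothed_lt wm wp σ (x - t*wp) hw).2
    simp only [hf]
    nlinarith
  have hfy2 : x ≤ f (x - t * wm) := by
    have := (smoothed_lt wm wp σ (x - t*wm) hw).1
    simp only [hf]
    nlinarith
  have hsub := intermediate_value_Icc hy12 hcont.continuousOn
  obtain ⟨y, _, hy⟩ := hsub ⟨hfy1, hfy2⟩
  exact ⟨y, hy⟩

set_option maxHeartbeats 2000000 in
theorem burgers_characteristic_solution_close_to_rarefactionWave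
    (wm wp : ℝ) (hw : wm < wp) :
    ∃ C : ℝ, 0 < C ∧ ∃ σ₀ : ℝ, 0 < σ₀ ∧
      ∀ σ : ℝ, 0 < σ → σ < σ₀ → ∀ w : ℝ → ℝ → ℝ,
        -- `w` is the characteristic solution of Burgers' equation with data `w_σ`:
        (∀ t : ℝ, 0 ≤ t → ∀ y : ℝ,
          w t (y + t * smoothedRiemannData wm wp σ y) = smoothedRiemannData wm wp σ y) →
        ∀ t : ℝ, 0 < t → ∀ x : ℝ,
          |w t x - rarefactionWave wm wp t x|
            ≤ C / t * (σ * Real.log (1 + t) + σ * |Real.log σ|) := by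
  have hb : 0 < (wp - wm)/2 := by linarith
  have hL : 0 < Real.log 2 := Real.log_pos (by norm_num)
  refine ⟨1 + (1 + |Real.log (2*((wp-wm)/2))|) / Real.log 2, ?_, 1/2, by norm_num, ?_⟩
  · have := div_nonneg (by positivity : (0:ℝ) ≤ 1 + |Real.log (2*((wp-wm)/2))|) hL.le
    linarith
  intro σ hσ hσ2 w hchar t ht x
  obtain ⟨y, hy⟩ := exists_char wm wp σ hw hσ t x ht
  have hwx : w t x = smoothedRiemannData wm wp σ y := by rw [← hy]; exact hchar t ht.le y
  set b : ℝ := (wp - wm)/2 with hbdef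
  set W : ℝ := smoothedRiemannData wm wp σ y with hW
  set T : ℝ := Real.tanh (y/σ) with hT
  have hWeq : W = (wp + wm)/2 + b * T := rfl
  have hT1 : T < 1 := tanh_lt_one' _
  have hT2 : -1 < T := neg_one_lt_tanh' _
  have h1mT : 1 - T ≤ 2 * Real.exp (-(2*(y/σ))) := one_sub_tanh_le _
  have h1pT : 1 + T ≤ 2 * Real.exp (2*(y/σ)) := one_add_tanh_le _
  have hyx : y = x - t * W := by linarith [hy]
  rw [hwx]
  rw [div_mul_eq_mul_div, le_div_iff₀ ht]
  unfold rarefactionWave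
  split_ifs with h1 h2
  · -- x ≤ wm * t : W - wm = b*(1+T)
    have h1T : 0 < 1 + T := by linarith
    set s : ℝ := t * (b * (1 + T)) with hs
    have hs0 : 0 ≤ s := (mul_pos ht (mul_pos hb h1T)).le
    have hyle : y ≤ -s := by
      have hWm : W - wm = b * (1 + T) := by rw [hWeq, hbdef]; ring
      nlinarith
    have harg : 2*(y/σ) ≤ -(2*s/σ) := by
      have h' : y/σ ≤ (-s)/σ := by gcongr
      have h'' : (-s)/σ = -(s/σ) := neg_div _ _
      rw [h''] at h'
      have : 2*s/σ = 2*(s/σ) := by ring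
      rw [this]
      linarith
    have hexp := Real.exp_le_exp.mpr harg
    have hsle : s ≤ 2*b*t * Real.exp (-(2*s/σ)) := by
      nlinarith [Real.exp_pos (2*(y/σ)), Real.exp_pos (-(2*s/σ))]
    have hkey := key_est b σ t s hb hσ (by linarith) ht hs0 (bootstrap _ _ _ hs0 hsle)
    have habsW : |W - wm| = b * (1 + T) := by
      rw [hWeq, hbdef]
      rw [abs_of_pos (by nlinarith)]
      ring
    rw [habsW]
    calc b * (1 + T) * t = s := by rw [hs]; ring
      _ ≤ _ := hkey
  · -- wp * t ≤ x : wp - W = b*(1-T)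
    have h1T : 0 < 1 - T := by linarith
    set s : ℝ := t * (b * (1 - T)) with hs
    have hs0 : 0 ≤ s := (mul_pos ht (mul_pos hb h1T)).le
    have hyge : s ≤ y := by
      have hWp : wp - W = b * (1 - T) := by rw [hWeq, hbdef]; ring
      nlinarith
    have harg : -(2*(y/σ)) ≤ -(2*s/σ) := by
      have h' : s/σ ≤ y/σ := by gcongr
      have : 2*s/σ = 2*(s/σ) := by ring
      rw [this]
      linarith
    have hexp := Real.exp_le_exp.mpr harg
    have hsle : s ≤ 2*b*t * Real.exp (-(2*s/σ)) := by
      nlinarith [Real.exp_pos (-(2*(y/σ))), Real.exp_pos (-(2*s/σ))]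
    have hkey := key_est b σ t s hb hσ (by linarith) ht hs0 (bootstrap _ _ _ hs0 hsle)
    have habsW : |W - wp| = b * (1 - T) := by
      rw [hWeq, hbdef]
      rw [abs_of_neg (by nlinarith)]
      ring
    rw [habsW]
    calc b * (1 - T) * t = s := by rw [hs]; ring
      _ ≤ _ := hkey
  · -- wm*t < x < wp*t : W - x/t = -(y/t)
    push_neg at h1 h2
    have hxt : W - x/t = -(y/t) := by
      rw [hyx]; field_simp; ring
    rw [hxt]
    have habsy : |(-(y/t))| * t = |y| := by
      rw [abs_neg, abs_div, abs_of_pos ht, div_mul_cancel₀]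
      exact ht.ne'
    rw [habsy]
    set s : ℝ := |y| with hs
    have hs0 : 0 ≤ s := abs_nonneg _
    rcases le_or_gt 0 y with hy0 | hy0
    · have hsy : s = y := abs_of_nonneg hy0
      have hylt : y ≤ t * (b * (1 - T)) := by
        have hWp : wp - W = b * (1 - T) := by rw [hWeq, hbdef]; ring
        nlinarith
      have hsle : s ≤ 2*b*t * Real.exp (-(2*s/σ)) := by
        rw [hsy]
        have : -(2*y/σ) = -(2*(y/σ)) := by ring
        rw [this]
        nlinarith [Real.exp_pos (-(2*(y/σ)))]
      exact key_est b σ t s hb hσ (by linarith) ht hs0 (bootstrap _ _ _ hs0 hsle)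
    · have hsy : s = -y := abs_of_neg hy0
      have hylt : -y ≤ t * (b * (1 + T)) := by
        have hWm : W - wm = b * (1 + T) := by rw [hWeq, hbdef]; ring
        nlinarith
      have hsle : s ≤ 2*b*t * Real.exp (-(2*s/σ)) := by
        rw [hsy]
        have : -(2*(-y)/σ) = 2*(y/σ) := by ring
        rw [this]
        nlinarith [Real.exp_pos (2*(y/σ))]
      exact key_est b σ t s hb hσ (by linarith) ht hs0 (bootstrap _ _ _ hs0 hsle)
end

section
/- Define φ : ℝ³ → ℝ by φ(x) = exp(1/(|x|² − 1)) for |x| < 1 and φ(x) = 0 for |x| ≥ 1, and for a > 0 set φ_a(x) = a^{−3}·φ(x/a). Then φ_a is continuously differentiable on ℝ³, and for every λ ∈ (0,1) there exists a constant C_λ > 0, independent of a, such that for all a > 0 and all x, v ∈ ℝ³: |v · ∇φ_a(x)| ≤ C_λ · a^{−1−3λ} · |v| · (φ_a(x))^{1−λ}. -/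
/-!
Away from the boundary of the unit ball, `φ = g ∘ (1 - ‖·‖²)` with `g u = exp (-1/u)`, whose
derivative is `u⁻² g u`. Splitting `g = exp (-lam/u) · g^(1 - lam)` and bounding
`exp (-lam/u) ≤ 3! u³ / lam³` absorbs the singular factor `u⁻²`, so `‖∇φ‖ ≤ C_lam φ^(1-lam)`.
The scaling `φ_a = a⁻³ φ(·/a)` contributes `a⁻⁴ = a^(-1-3lam) · (a⁻³)^(1-lam)`.
-/

open Set

noncomputable section

local notation "E3" => EuclideanSpace ℝ (Fin 3)

/-- The standard bump-type cut-off function on `ℝ³`. -/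
def cutoff (x : EuclideanSpace ℝ (Fin 3)) : ℝ :=
  if ‖x‖ < 1 then Real.exp (1 / (‖x‖ ^ 2 - 1)) else 0

/-- The rescaled cut-off `φ_a(x) = a⁻³ φ(x/a)`. -/
def cutoffScaled (a : ℝ) (x : EuclideanSpace ℝ (Fin 3)) : ℝ :=
  (a ^ 3)⁻¹ * cutoff (a⁻¹ • x)

lemma expNegInvGlue.hasDerivAt (x : ℝ) :
    HasDerivAt expNegInvGlue (x⁻¹ ^ 2 * expNegInvGlue x) x := by
  simpa using expNegInvGlue.hasDerivAt_polynomial_eval_inv_mul 1 x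

lemma exp_neg_le_factorial_div_pow {s : ℝ} (hs : 0 < s) (n : ℕ) :
    Real.exp (-s) ≤ n.factorial / s ^ n := by
  rw [Real.exp_neg, inv_le_comm₀ (Real.exp_pos s) (by positivity), inv_div]
  exact Real.pow_div_factorial_le_exp _ hs.le n

lemma inv_sq_mul_expNegInvGlue_le {lam u : ℝ} (hlam : 0 < lam) (hu : u ≤ 1) :
    u⁻¹ ^ 2 * expNegInvGlue u ≤ 6 / lam ^ 3 * expNegInvGlue u ^ (1 - lam) := by
  rcases le_or_gt u 0 with hu0 | hu0
  · rw [expNegInvGlue.zero_of_nonpos hu0, mul_zero]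
    exact mul_nonneg (by positivity) (Real.rpow_nonneg le_rfl _)
  have hglue : expNegInvGlue u = Real.exp (-u⁻¹) := by
    rw [expNegInvGlue, if_neg hu0.not_ge]
  have hdecay : Real.exp (-(lam / u)) ≤ 6 * u ^ 3 / lam ^ 3 := by
    simpa [div_pow, div_div_eq_mul_div, Nat.factorial] using
      exp_neg_le_factorial_div_pow (div_pos hlam hu0) 3
  rw [hglue, ← Real.exp_mul]
  calc u⁻¹ ^ 2 * Real.exp (-u⁻¹)
      = u⁻¹ ^ 2 * Real.exp (-(lam / u)) * Real.exp (-u⁻¹ * (1 - lam)) := by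
        rw [mul_assoc, ← Real.exp_add]; ring_nf
    _ ≤ u⁻¹ ^ 2 * (6 * u ^ 3 / lam ^ 3) * Real.exp (-u⁻¹ * (1 - lam)) := by gcongr
    _ = 6 / lam ^ 3 * u * Real.exp (-u⁻¹ * (1 - lam)) := by field_simp
    _ ≤ 6 / lam ^ 3 * Real.exp (-u⁻¹ * (1 - lam)) := by
        gcongr; exact mul_le_of_le_one_right (by positivity) hu

lemma cutoff_eq_expNegInvGlue (x : E3) : cutoff x = expNegInvGlue (1 - ‖x‖ ^ 2) := by
  unfold cutoff
  rcases lt_or_ge ‖x‖ 1 with h | h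
  · have hu : 0 < 1 - ‖x‖ ^ 2 := by nlinarith [norm_nonneg x]
    rw [if_pos h, expNegInvGlue, if_neg hu.not_ge, one_div, ← inv_neg, neg_sub]
  · rw [if_neg h.not_gt, expNegInvGlue.zero_of_nonpos (by nlinarith)]

lemma cutoff_nonneg (x : E3) : 0 ≤ cutoff x := by
  rw [cutoff_eq_expNegInvGlue]
  exact expNegInvGlue.nonneg _

lemma contDiff_cutoff {n : ℕ∞} : ContDiff ℝ n cutoff := by
  rw [funext cutoff_eq_expNegInvGlue]
  exact expNegInvGlue.contDiff.comp (contDiff_const.sub (contDiff_norm_sq ℝ))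

lemma hasFDerivAt_cutoff (y : E3) :
    HasFDerivAt cutoff ((-(2 * ((1 - ‖y‖ ^ 2)⁻¹ ^ 2 * cutoff y))) • innerSL ℝ y) y := by
  have h := (expNegInvGlue.hasDerivAt _).comp_hasFDerivAt y
    ((hasStrictFDerivAt_norm_sq y).hasFDerivAt.const_sub 1)
  rw [funext cutoff_eq_expNegInvGlue]
  refine h.congr_fderiv ?_
  ext v
  simp only [inv_pow, smul_neg, neg_apply, smul_apply, coe_innerSL_apply, nsmul_eq_mul,
    Nat.cast_ofNat, smul_eq_mul, neg_smul, neg_inj]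
  ring

lemma norm_fderiv_cutoff_le {lam : ℝ} (hlam : 0 < lam) (y : E3) :
    ‖fderiv ℝ cutoff y‖ ≤ 12 / lam ^ 3 * cutoff y ^ (1 - lam) := by
  have hrpow : 0 ≤ cutoff y ^ (1 - lam) := Real.rpow_nonneg (cutoff_nonneg y) _
  rw [(hasFDerivAt_cutoff y).fderiv, norm_smul, innerSL_apply_norm, Real.norm_eq_abs, abs_neg,
    abs_of_nonneg (by have := cutoff_nonneg y; positivity)]
  rcases le_or_gt ‖y‖ 1 with hy | hy
  · have hbound := inv_sq_mul_expNegInvGlue_le hlam (sub_le_self 1 (sq_nonneg ‖y‖))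
    rw [← cutoff_eq_expNegInvGlue] at hbound
    calc 2 * ((1 - ‖y‖ ^ 2)⁻¹ ^ 2 * cutoff y) * ‖y‖
        ≤ 2 * (6 / lam ^ 3 * cutoff y ^ (1 - lam)) * 1 := by gcongr
      _ = 12 / lam ^ 3 * cutoff y ^ (1 - lam) := by ring
  · have hzero : cutoff y = 0 := if_neg hy.not_gt
    rw [hzero, mul_zero, mul_zero, zero_mul]
    positivity

lemma contDiff_cutoffScaled {n : ℕ∞} (a : ℝ) : ContDiff ℝ n (cutoffScaled a) :=
  contDiff_const.mul (contDiff_cutoff.comp (contDiff_id.const_smul a⁻¹))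

lemma fderiv_cutoffScaled_apply (a : ℝ) (x v : E3) :
    fderiv ℝ (cutoffScaled a) x v = (a ^ 3)⁻¹ * a⁻¹ * fderiv ℝ cutoff (a⁻¹ • x) v := by
  have h : HasFDerivAt (cutoffScaled a)
      ((a ^ 3)⁻¹ • (fderiv ℝ cutoff (a⁻¹ • x)).comp (a⁻¹ • ContinuousLinearMap.id ℝ E3)) x :=
    ((contDiff_cutoff.differentiable (n := 1) one_ne_zero _).hasFDerivAt.comp x
      ((hasFDerivAt_id x).const_smul a⁻¹)).const_mul (a ^ 3)⁻¹
  rw [h.fderiv]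
  simp [mul_assoc]

lemma cutoffScaled_rpow {a : ℝ} (ha : 0 < a) (x : E3) (p : ℝ) :
    cutoffScaled a x ^ p = a ^ (-3 * p) * cutoff (a⁻¹ • x) ^ p := by
  rw [cutoffScaled, Real.mul_rpow (by positivity) (cutoff_nonneg _), Real.inv_rpow (by positivity),
    ← Real.rpow_natCast, ← Real.rpow_mul ha.le, ← Real.rpow_neg ha.le]
  ring_nf

theorem cutoff_gradient_interpolation_bound :
    (∀ a : ℝ, 0 < a → ContDiff ℝ 1 (cutoffScaled a)) ∧
    (∀ lam : ℝ, 0 < lam → lam < 1 →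
      ∃ C : ℝ, 0 < C ∧
        ∀ a : ℝ, 0 < a → ∀ x v : E3,
          |fderiv ℝ (cutoffScaled a) x v|
            ≤ C * a ^ (-1 - 3 * lam) * ‖v‖ * cutoffScaled a x ^ (1 - lam)) := by
  refine ⟨fun a _ => contDiff_cutoffScaled a, fun lam hlam _ => ⟨12 / lam ^ 3, by positivity, ?_⟩⟩
  intro a ha x v
  have hscale : (a ^ 3)⁻¹ * a⁻¹ = a ^ (-1 - 3 * lam) * a ^ (-3 * (1 - lam)) := by
    rw [← Real.rpow_add ha, ← Real.rpow_natCast, ← Real.rpow_neg ha.le, ← Real.rpow_neg_one,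
      ← Real.rpow_add ha]
    ring_nf
  rw [fderiv_cutoffScaled_apply, cutoffScaled_rpow ha, abs_mul, abs_of_pos (by positivity)]
  calc (a ^ 3)⁻¹ * a⁻¹ * |fderiv ℝ cutoff (a⁻¹ • x) v|
      ≤ (a ^ 3)⁻¹ * a⁻¹ * (‖fderiv ℝ cutoff (a⁻¹ • x)‖ * ‖v‖) := by
        gcongr; exact (fderiv ℝ cutoff _).le_opNorm v
    _ ≤ (a ^ 3)⁻¹ * a⁻¹ * (12 / lam ^ 3 * cutoff (a⁻¹ • x) ^ (1 - lam) * ‖v‖) := by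
        gcongr; exact norm_fderiv_cutoff_le hlam _
    _ = _ := by rw [hscale]; ring

end
end

section
/- Let σ > 0, K > 2, M ≥ 0, T > 0, and let y : [0,T] → ℝ be differentiable and nonnegative with y′(t) ≤ (K/(σ + t))·y(t) + M·(σ + t) for all t ∈ [0,T]. Then for all t ∈ [0,T]: y(t) ≤ ((σ + t)/σ)^K · ( y(0) + M·σ²/(K − 2) ). -/
open Set

/-!
With the integrating factor `(σ + t)^(-K)`, the potential
`E t = (σ + t)^(-K) * (y t + M (σ + t)^2 / (K - 2))` has derivative
`(σ + t)^(-K) * (y' t - K y t / (σ + t) - M (σ + t))`, which the differential inequality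
makes nonpositive. Hence `E t ≤ E 0`, and dropping the nonnegative source term on the left
gives the bound.
-/

lemma antitoneOn_of_hasDerivWithinAt_nonpos_of_forall {D : Set ℝ} (hD : Convex ℝ D)
    {f f' : ℝ → ℝ} (hf : ∀ x ∈ D, HasDerivWithinAt f (f' x) D x)
    (hf'₀ : ∀ x ∈ D, f' x ≤ 0) : AntitoneOn f D :=
  antitoneOn_of_hasDerivWithinAt_nonpos hD (fun x hx => (hf x hx).continuousWithinAt)
    (fun x hx => (hf x (interior_subset hx)).mono interior_subset)
    (fun x hx => hf'₀ x (interior_subset hx))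

lemma le_div_rpow_mul_of_rpow_neg_mul_le {σ u K z A : ℝ} (hσ : 0 < σ) (hu : 0 < u)
    (h : u ^ (-K) * z ≤ σ ^ (-K) * A) : z ≤ (u / σ) ^ K * A := by
  rw [Real.rpow_neg hu.le, Real.rpow_neg hσ.le, inv_mul_le_iff₀ (Real.rpow_pos_of_pos hu K)]
    at h
  rwa [Real.div_rpow hu.le hσ.le, div_mul_eq_mul_div, mul_div_assoc, ← inv_mul_eq_div]

noncomputable def gronwallPotential (σ K M : ℝ) (y : ℝ → ℝ) (t : ℝ) : ℝ :=
  (σ + t) ^ (-K) * (y t + M * (σ + t) ^ 2 / (K - 2))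

namespace gronwallPotential

variable {σ K M : ℝ} {y : ℝ → ℝ}

lemma hasDerivWithinAt {t dy : ℝ} {s : Set ℝ} (hK : K ≠ 2) (ht : 0 < σ + t)
    (hy : HasDerivWithinAt y dy s t) :
    HasDerivWithinAt (gronwallPotential σ K M y)
      ((σ + t) ^ (-K) * (dy - (K / (σ + t) * y t + M * (σ + t)))) s t := by
  have hlin : HasDerivWithinAt (fun u => σ + u) 1 s t := (hasDerivWithinAt_id t s).const_add σ
  have hweight := hlin.rpow_const (p := -K) (Or.inl ht.ne')
  have hsource := ((hlin.pow 2).const_mul M).div_const (K - 2)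
  refine (hweight.mul (hy.add hsource)).congr_deriv ?_
  have hK2 : K - 2 ≠ 0 := sub_ne_zero.mpr hK
  simp only [Pi.add_apply, Pi.pow_apply]
  rw [Real.rpow_sub ht, Real.rpow_one]
  field_simp
  ring

lemma rpow_neg_mul_le {t : ℝ} (hK : 2 < K) (hM : 0 ≤ M) (ht : 0 < σ + t) :
    (σ + t) ^ (-K) * y t ≤ gronwallPotential σ K M y t := by
  have hsource : 0 ≤ M * (σ + t) ^ 2 / (K - 2) := by
    have := sub_pos.mpr hK
    positivity
  exact mul_le_mul_of_nonneg_left (le_add_of_nonneg_right hsource)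
    (Real.rpow_pos_of_pos ht _).le

lemma antitoneOn {T : ℝ} {y' : ℝ → ℝ} (hσ : 0 < σ) (hK : K ≠ 2)
    (hderiv : ∀ t ∈ Icc 0 T, HasDerivWithinAt y (y' t) (Icc 0 T) t)
    (hineq : ∀ t ∈ Icc 0 T, y' t ≤ K / (σ + t) * y t + M * (σ + t)) :
    AntitoneOn (gronwallPotential σ K M y) (Icc 0 T) := by
  have hpos : ∀ t ∈ Icc 0 T, 0 < σ + t := fun t ht => by linarith [ht.1]
  exact antitoneOn_of_hasDerivWithinAt_nonpos_of_forall (convex_Icc 0 T)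
    (fun t ht => hasDerivWithinAt hK (hpos t ht) (hderiv t ht))
    (fun t ht => mul_nonpos_of_nonneg_of_nonpos (Real.rpow_pos_of_pos (hpos t ht) _).le
      (sub_nonpos.mpr (hineq t ht)))

end gronwallPotential

theorem gronwall_type_inequality_with_source_general
    (σ K M T : ℝ) (hσ : 0 < σ) (hK : 2 < K) (hM : 0 ≤ M)
    (y y' : ℝ → ℝ)
    (hderiv : ∀ t ∈ Set.Icc (0 : ℝ) T, HasDerivWithinAt y (y' t) (Set.Icc 0 T) t)
    (hineq : ∀ t ∈ Set.Icc (0 : ℝ) T, y' t ≤ K / (σ + t) * y t + M * (σ + t)) :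
    ∀ t ∈ Set.Icc (0 : ℝ) T,
      y t ≤ ((σ + t) / σ) ^ K * (y 0 + M * σ ^ 2 / (K - 2)) := by
  intro t ht
  have ht_pos : 0 < σ + t := by linarith [ht.1]
  have hdecay : gronwallPotential σ K M y t ≤ gronwallPotential σ K M y 0 :=
    gronwallPotential.antitoneOn hσ hK.ne' hderiv hineq ⟨le_rfl, ht.1.trans ht.2⟩ ht ht.1
  refine le_div_rpow_mul_of_rpow_neg_mul_le hσ ht_pos ?_
  simpa only [gronwallPotential, add_zero] using
    (gronwallPotential.rpow_neg_mul_le hK hM ht_pos).trans hdecay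

theorem gronwall_type_inequality_with_source
    (σ K M T : ℝ) (hσ : 0 < σ) (hK : 2 < K) (hM : 0 ≤ M) (hT : 0 < T)
    (y y' : ℝ → ℝ)
    (hderiv : ∀ t ∈ Set.Icc (0 : ℝ) T, HasDerivWithinAt y (y' t) (Set.Icc 0 T) t)
    (hnonneg : ∀ t ∈ Set.Icc (0 : ℝ) T, 0 ≤ y t)
    (hineq : ∀ t ∈ Set.Icc (0 : ℝ) T, y' t ≤ K / (σ + t) * y t + M * (σ + t)) :
    ∀ t ∈ Set.Icc (0 : ℝ) T,
      y t ≤ ((σ + t) / σ) ^ K * (y 0 + M * σ ^ 2 / (K - 2)) :=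
  gronwall_type_inequality_with_source_general σ K M T hσ hK hM y y' hderiv hineq
end
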